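/- arXiv:math/0411579 — 6 statements merged into one kernel-verified Lean document; each statement's English description precedes it below -/
import Mathlib

section
/- Let K be a field and q ∈ K an invertible element with q² ≠ 1. Let μ_1, …, μ_p ∈ K be pairwise distinct. Set σ_0 = 1 and σ_k = e_k(μ_1,…,μ_p) for 1 ≤ k ≤ p, define x_i = ∏_{j≠i} (μ_i − q⁻²μ_j)/(μ_i − μ_j) for 1 ≤ i ≤ p, and put s_k = Σ_{i=1}^p μ_i^k x_i for k ≥ 1. Then the q-Newton identities hold: for every 1 ≤ k ≤ p, Σ_{j=1}^k (−1)^{j−1} s_j σ_{k−j} = k_q · q^{1−k} · σ_k. -/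
/-- The q-number `n_q = (q^n - q^{-n})/(q - q⁻¹)`. -/
noncomputable def qnum {K : Type*} [Field K] (q : K) (n : ℤ) : K :=
  (q ^ n - q ^ (-n)) / (q - q⁻¹)

/-- Elementary symmetric function of the family `t` restricted to the index set `s`:
`e_0 = 1` and `e_k = Σ_{i_1 < ⋯ < i_k in s} t_{i_1} ⋯ t_{i_k}` (equal to `0` when
`k` exceeds the cardinality of `s`). -/
def esymmOn {R : Type*} [CommRing R] {ι : Type*} (s : Finset ι) (t : ι → R) (k : ℕ) : R :=
  ∑ A ∈ Finset.powersetCard k s, ∏ i ∈ A, t i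

open Finset Polynomial

lemma esymmOn_eq_multiset {R : Type*} [CommRing R] {ι : Type*} (s : Finset ι) (t : ι → R)
    (k : ℕ) : esymmOn s t k = (s.val.map t).esymm k := by
  rw [Finset.esymm_map_val]; rfl

lemma coeff_prod_X_sub_C' {K : Type*} [CommRing K] {ι : Type*} (s : Finset ι) (r : ι → K)
    {k : ℕ} (h : k ≤ s.card) :
    (∏ i ∈ s, (X - C (r i))).coeff k = (-1) ^ (s.card - k) * esymmOn s r (s.card - k) := by
  have h1 : (∏ i ∈ s, (X - C (r i))) = ((s.val.map r).map (fun a => X - C a)).prod := by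
    rw [Multiset.map_map]; rfl
  rw [h1, Multiset.prod_X_sub_C_coeff _ (by simpa using h), esymmOn_eq_multiset]
  simp

lemma esymmOn_smul {K : Type*} [CommRing K] {ι : Type*} (s : Finset ι) (r : ι → K) (c : K)
    (k : ℕ) : esymmOn s (fun i => c * r i) k = c ^ k * esymmOn s r k := by
  unfold esymmOn
  rw [Finset.mul_sum]
  refine Finset.sum_congr rfl fun A hA => ?_
  rw [Finset.prod_mul_distrib, Finset.prod_const, (Finset.mem_powersetCard.mp hA).2]

lemma esymmOn_insert {R : Type*} [CommRing R] {ι : Type*} [DecidableEq ι] (u : Finset ι)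
    (f : ι → R) {i : ι} (hi : i ∉ u) (n : ℕ) :
    esymmOn (insert i u) f (n + 1) = esymmOn u f (n + 1) + f i * esymmOn u f n := by
  unfold esymmOn
  rw [Finset.powersetCard_succ_insert hi, Finset.sum_union]
  · congr 1
    rw [Finset.sum_image, Finset.mul_sum]
    · refine Finset.sum_congr rfl fun A hA => ?_
      have hiA : i ∉ A := fun hc => hi ((Finset.mem_powersetCard.mp hA).1 hc)
      rw [Finset.prod_insert hiA]
    · intro A hA B hB hAB
      have hiA : i ∉ A := fun hc => hi ((Finset.mem_powersetCard.mp hA).1 hc)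
      have hiB : i ∉ B := fun hc => hi ((Finset.mem_powersetCard.mp hB).1 hc)
      rw [← Finset.erase_insert hiA, hAB, Finset.erase_insert hiB]
  · rw [Finset.disjoint_right]
    intro A hA hA'
    obtain ⟨B, hB, rfl⟩ := Finset.mem_image.mp hA
    exact hi ((Finset.mem_powersetCard.mp hA').1 (Finset.mem_insert_self i B))

lemma esymmOn_erase {R : Type*} [CommRing R] {ι : Type*} [DecidableEq ι] (s : Finset ι)
    (f : ι → R) {i : ι} (hi : i ∈ s) (n : ℕ) :
    esymmOn s f (n + 1) = esymmOn (s.erase i) f (n + 1) + f i * esymmOn (s.erase i) f n := by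
  conv_lhs => rw [← Finset.insert_erase hi]
  exact esymmOn_insert _ f (Finset.notMem_erase i s) n

lemma telescope_esymmOn {K : Type*} [CommRing K] {ι : Type*} [DecidableEq ι] [Fintype ι]
    (μ : ι → K) (i : ι) (n : ℕ) :
    ∑ j ∈ Finset.range (n + 1), (-1 : K) ^ j * μ i ^ (j + 1) * esymmOn Finset.univ μ (n - j)
      = μ i * esymmOn (Finset.univ.erase i) μ n := by
  induction n with
  | zero => simp [esymmOn]
  | succ n ih =>
    rw [Finset.sum_range_succ']
    have h1 : ∀ j, (-1 : K) ^ (j + 1) * μ i ^ (j + 1 + 1) * esymmOn Finset.univ μ (n + 1 - (j + 1))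
        = -μ i * ((-1 : K) ^ j * μ i ^ (j + 1) * esymmOn Finset.univ μ (n - j)) := by
      intro j
      rw [Nat.succ_sub_succ]
      ring
    rw [Finset.sum_congr rfl fun j _ => h1 j, ← Finset.mul_sum, ih]
    simp only [pow_zero, Nat.sub_zero, one_mul]
    rw [esymmOn_erase Finset.univ μ (Finset.mem_univ i) n]
    ring

lemma key_identity {K : Type*} [Field K] {p : ℕ} (μ : Fin p → K) (hμ : Function.Injective μ)
    (t : K) (x : Fin p → K)
    (hx : ∀ i, x i = ∏ j ∈ Finset.univ.erase i, (μ i - t * μ j) / (μ i - μ j))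
    {k : ℕ} (hk1 : 1 ≤ k) (hkp : k ≤ p) :
    (1 - t) * ∑ i, μ i * x i * esymmOn (Finset.univ.erase i) μ (k - 1)
      = (1 - t ^ k) * esymmOn Finset.univ μ k := by
  classical
  obtain ⟨m, rfl⟩ : ∃ m, k = m + 1 := ⟨k - 1, by omega⟩
  simp only [Nat.add_sub_cancel]
  set Q : Polynomial K := ∏ i, (X - C (t * μ i)) with hQ
  set P : Polynomial K := ∏ i, (X - C (μ i)) with hP
  set c : Fin p → K := fun i => (1 - t) * μ i * x i with hc
  set G : Polynomial K := ∑ i, C (c i) * ∏ j ∈ Finset.univ.erase i, (X - C (μ j)) with hG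
  have hcard : (Finset.univ : Finset (Fin p)).card = p := by simp
  have hcarde : ∀ i : Fin p, (Finset.univ.erase i).card = p - 1 := by
    intro i; rw [Finset.card_erase_of_mem (Finset.mem_univ i), hcard]
  have hΔ : ∀ i : Fin p, (∏ j ∈ Finset.univ.erase i, (μ i - μ j)) ≠ 0 := by
    intro i
    rw [Finset.prod_ne_zero_iff]
    intro j hj
    exact sub_ne_zero.mpr fun h => (Finset.mem_erase.mp hj).1 (hμ h).symm
  have hxΔ : ∀ i, x i * ∏ j ∈ Finset.univ.erase i, (μ i - μ j)
      = ∏ j ∈ Finset.univ.erase i, (μ i - t * μ j) := by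
    intro i
    rw [hx i, Finset.prod_div_distrib, div_mul_cancel₀ _ (hΔ i)]
  have hQm : Q.Monic := monic_prod_of_monic _ _ fun i _ => monic_X_sub_C _
  have hPm : P.Monic := monic_prod_of_monic _ _ fun i _ => monic_X_sub_C _
  have hQd : Q.natDegree = p := by
    rw [hQ, natDegree_prod_of_monic _ _ fun i _ => monic_X_sub_C _]
    simp only [natDegree_X_sub_C, Finset.sum_const, smul_eq_mul, mul_one, Finset.card_univ,
      Fintype.card_fin]
  have hPd : P.natDegree = p := by
    rw [hP, natDegree_prod_of_monic _ _ fun i _ => monic_X_sub_C _]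
    simp only [natDegree_X_sub_C, Finset.sum_const, smul_eq_mul, mul_one, Finset.card_univ,
      Fintype.card_fin]
  have hdQP : (Q - P).degree < ((Finset.univ : Finset (Fin p)).card : WithBot ℕ) := by
    rw [hcard]
    have h1 : (Q - P).degree < Q.degree := by
      apply Polynomial.degree_sub_lt
      · rw [Polynomial.degree_eq_natDegree hQm.ne_zero,
          Polynomial.degree_eq_natDegree hPm.ne_zero, hQd, hPd]
      · exact hQm.ne_zero
      · rw [hQm.leadingCoeff, hPm.leadingCoeff]
    rwa [Polynomial.degree_eq_natDegree hQm.ne_zero, hQd] at h1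
  have hdG : G.degree < ((Finset.univ : Finset (Fin p)).card : WithBot ℕ) := by
    rw [hcard]
    refine lt_of_le_of_lt (Polynomial.degree_sum_le _ _) ?_
    rw [Finset.sup_lt_iff (by exact_mod_cast WithBot.bot_lt_coe p)]
    intro i _
    refine lt_of_le_of_lt (Polynomial.degree_mul_le _ _) ?_
    have hm2 : (∏ j ∈ Finset.univ.erase i, (X - C (μ j))).Monic :=
      monic_prod_of_monic _ _ fun _ _ => monic_X_sub_C _
    have hd2 : (∏ j ∈ Finset.univ.erase i, (X - C (μ j))).natDegree = p - 1 := by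
      rw [natDegree_prod_of_monic _ _ fun _ _ => monic_X_sub_C _]
      simp only [natDegree_X_sub_C, Finset.sum_const, smul_eq_mul, mul_one, hcarde i]
    calc (C (c i)).degree + (∏ j ∈ Finset.univ.erase i, (X - C (μ j))).degree
        ≤ 0 + ((p - 1 : ℕ) : WithBot ℕ) := by
          apply add_le_add Polynomial.degree_C_le
          rw [Polynomial.degree_eq_natDegree hm2.ne_zero, hd2]
      _ = ((p - 1 : ℕ) : WithBot ℕ) := zero_add _
      _ < (p : WithBot ℕ) := by exact_mod_cast Nat.sub_lt (by omega) (by omega)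
  have heval : ∀ l : Fin p, (Q - P).eval (μ l) = G.eval (μ l) := by
    intro l
    have hPe : P.eval (μ l) = 0 := by
      rw [hP, eval_prod]
      exact Finset.prod_eq_zero (Finset.mem_univ l) (by simp)
    have hQe : Q.eval (μ l) = c l * ∏ j ∈ Finset.univ.erase l, (μ l - μ j) := by
      rw [hQ, eval_prod]
      simp only [eval_sub, eval_X, eval_C]
      rw [← Finset.mul_prod_erase _ _ (Finset.mem_univ l), ← hxΔ l, hc]
      ring
    have hGe : G.eval (μ l) = c l * ∏ j ∈ Finset.univ.erase l, (μ l - μ j) := by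
      rw [hG, Polynomial.eval_finset_sum]
      rw [Finset.sum_eq_single l]
      · simp [eval_prod]
      · intro i _ hil
        simp only [eval_mul, eval_C, eval_prod, eval_sub, eval_X]
        refine mul_eq_zero_of_right _
          (Finset.prod_eq_zero (Finset.mem_erase.mpr ⟨hil.symm, Finset.mem_univ l⟩) (sub_self _))
      · intro h; exact absurd (Finset.mem_univ l) h
    rw [Polynomial.eval_sub, hPe, hQe, hGe, sub_zero]
  have hQPG : Q - P = G :=
    Polynomial.eq_of_degrees_lt_of_eval_index_eq (v := μ) Finset.univ
      (Function.Injective.injOn hμ) hdQP hdG fun l _ => heval l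
  have hco := congrArg (fun f : Polynomial K => f.coeff (p - (m + 1))) hQPG
  simp only [Polynomial.coeff_sub] at hco
  have hQc : Q.coeff (p - (m + 1))
      = (-1) ^ (m + 1) * (t ^ (m + 1) * esymmOn Finset.univ μ (m + 1)) := by
    have h1 := coeff_prod_X_sub_C' (Finset.univ : Finset (Fin p)) (fun i => t * μ i)
      (k := p - (m + 1)) (by rw [hcard]; omega)
    rw [hcard, show p - (p - (m + 1)) = m + 1 by omega, esymmOn_smul] at h1
    rw [hQ, h1]
  have hPc : P.coeff (p - (m + 1)) = (-1) ^ (m + 1) * esymmOn Finset.univ μ (m + 1) := by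
    have h1 := coeff_prod_X_sub_C' (Finset.univ : Finset (Fin p)) μ
      (k := p - (m + 1)) (by rw [hcard]; omega)
    rw [hcard, show p - (p - (m + 1)) = m + 1 by omega] at h1
    rw [hP, h1]
  have hGc : G.coeff (p - (m + 1))
      = (-1) ^ m * ((1 - t) * ∑ i, μ i * x i * esymmOn (Finset.univ.erase i) μ m) := by
    rw [hG, Polynomial.finset_sum_coeff, Finset.mul_sum, Finset.mul_sum]
    refine Finset.sum_congr rfl fun i _ => ?_
    rw [Polynomial.coeff_C_mul]
    have h1 := coeff_prod_X_sub_C' (Finset.univ.erase i) μ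
      (k := p - (m + 1)) (by rw [hcarde i]; omega)
    rw [hcarde i, show p - 1 - (p - (m + 1)) = m by omega] at h1
    rw [h1, hc]
    ring
  rw [hQc, hPc, hGc] at hco
  have hm0 : ((-1 : K) ^ m) ≠ 0 := pow_ne_zero _ (by norm_num)
  apply mul_left_cancel₀ hm0
  rw [← hco]
  ring

/-- the parametric resolution of the q-Newton identities. -/
theorem qNewton_parametric {K : Type*} [Field K] (q : K) (hq0 : q ≠ 0) (hq2 : q ^ 2 ≠ 1)
    {p : ℕ} (μ : Fin p → K) (hμ : Function.Injective μ)
    (σ : ℕ → K) (hσ : ∀ k, σ k = esymmOn Finset.univ μ k)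
    (x : Fin p → K)
    (hx : ∀ i, x i = ∏ j ∈ Finset.univ.erase i, (μ i - q⁻¹ ^ 2 * μ j) / (μ i - μ j))
    (s : ℕ → K) (hs : ∀ k, 1 ≤ k → s k = ∑ i, μ i ^ k * x i) :
    ∀ k : ℕ, 1 ≤ k → k ≤ p →
      ∑ j ∈ Finset.Icc 1 k, (-1 : K) ^ (j - 1) * s j * σ (k - j)
        = qnum q k * q ^ (1 - (k : ℤ)) * σ k := by
  intro k hk1 hkp
  obtain ⟨m, rfl⟩ : ∃ m, k = m + 1 := ⟨k - 1, by omega⟩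
  set t : K := q⁻¹ ^ 2 with ht
  -- basic nonvanishing facts
  have hqq : q - q⁻¹ ≠ 0 := by
    have h1 : q - q⁻¹ = (q ^ 2 - 1) * q⁻¹ := by
      field_simp
    rw [h1]
    exact mul_ne_zero (sub_ne_zero.mpr hq2) (inv_ne_zero hq0)
  have ht1 : (1 : K) - t ≠ 0 := by
    refine sub_ne_zero.mpr fun h => hq2 ?_
    rw [ht, inv_pow] at h
    rw [← inv_inv (q ^ 2), ← h, inv_one]
  -- rewrite the inner sums using the telescoping identity
  have hIcc : ∀ i : Fin p, (∑ j ∈ Finset.Icc 1 (m + 1),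
      (-1 : K) ^ (j - 1) * μ i ^ j * σ (m + 1 - j))
      = μ i * esymmOn (Finset.univ.erase i) μ m := by
    intro i
    rw [← Finset.Ico_add_one_right_eq_Icc, Finset.sum_Ico_eq_sum_range,
      show m + 1 + 1 - 1 = m + 1 by omega, ← telescope_esymmOn μ i m]
    refine Finset.sum_congr rfl fun j hj => ?_
    rw [hσ, show 1 + j - 1 = j by omega, show 1 + j = j + 1 by omega,
      show m + 1 - (j + 1) = m - j by omega]
  have hL : (∑ j ∈ Finset.Icc 1 (m + 1), (-1 : K) ^ (j - 1) * s j * σ (m + 1 - j))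
      = ∑ i, μ i * x i * esymmOn (Finset.univ.erase i) μ m := by
    calc (∑ j ∈ Finset.Icc 1 (m + 1), (-1 : K) ^ (j - 1) * s j * σ (m + 1 - j))
        = ∑ j ∈ Finset.Icc 1 (m + 1), ∑ i,
            x i * ((-1 : K) ^ (j - 1) * μ i ^ j * σ (m + 1 - j)) := by
          refine Finset.sum_congr rfl fun j hj => ?_
          rw [hs j (Finset.mem_Icc.mp hj).1, Finset.mul_sum, Finset.sum_mul]
          refine Finset.sum_congr rfl fun i _ => ?_
          ring
      _ = ∑ i, ∑ j ∈ Finset.Icc 1 (m + 1),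
            x i * ((-1 : K) ^ (j - 1) * μ i ^ j * σ (m + 1 - j)) := Finset.sum_comm
      _ = ∑ i, μ i * x i * esymmOn (Finset.univ.erase i) μ m := by
          refine Finset.sum_congr rfl fun i _ => ?_
          rw [← Finset.mul_sum, hIcc i]
          ring
  have hkey := key_identity μ hμ t x hx (k := m + 1) (by omega) hkp
  simp only [Nat.add_sub_cancel] at hkey
  rw [hL, hσ]
  have hS : (∑ i, μ i * x i * esymmOn (Finset.univ.erase i) μ m)
      = (1 - t ^ (m + 1)) / (1 - t) * esymmOn Finset.univ μ (m + 1) := by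
    rw [div_mul_eq_mul_div, eq_div_iff ht1]
    linear_combination hkey
  rw [hS]
  have hsc : qnum q ((m + 1 : ℕ) : ℤ) * q ^ (1 - ((m + 1 : ℕ) : ℤ))
      = (1 - t ^ (m + 1)) / (1 - t) := by
    unfold qnum
    rw [zpow_sub₀ hq0, zpow_one, zpow_natCast, zpow_neg, zpow_natCast, ht]
    have hqk : q ^ (m + 1) ≠ 0 := pow_ne_zero _ hq0
    field_simp
    have h2 : (q ^ (m + 1)) ^ 2 * (1 / q ^ 2) ^ (m + 1) = 1 := by
      rw [one_div, inv_pow, ← pow_mul, ← pow_mul, mul_comm 2 (m + 1)]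
      exact mul_inv_cancel₀ (pow_ne_zero _ hq0)
    rw [mul_sub, mul_one, h2]
  rw [hsc]
end

section
/- Let R be a commutative ring and t_1, …, t_n ∈ R. The determinant of the n×n matrix whose (i,j) entry (for 1 ≤ i,j ≤ n) is e_{i−1}(t̂_j) equals ∏_{1≤i<j≤n} (t_i − t_j). -/
open Finset

section helper
variable {R : Type*} [CommRing R] {ι : Type*} [DecidableEq ι]

lemma esymmOn_zero (s : Finset ι) (t : ι → R) : esymmOn s t 0 = 1 := by
  simp [esymmOn]

lemma esymmOn_rec {s : Finset ι} {j : ι} (hj : j ∈ s) (t : ι → R) (k : ℕ) :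
    esymmOn s t (k + 1) = esymmOn (s.erase j) t (k + 1) + t j * esymmOn (s.erase j) t k := by
  classical
  conv_lhs => rw [← Finset.insert_erase hj]
  rw [esymmOn, Finset.powersetCard_succ_insert (Finset.notMem_erase _ _)]
  rw [Finset.sum_union, Finset.sum_image]
  · congr 1
    rw [esymmOn, Finset.mul_sum]
    refine Finset.sum_congr rfl fun A hA => ?_
    rw [Finset.mem_powersetCard] at hA
    rw [Finset.prod_insert fun hjA => (Finset.notMem_erase j s) (hA.1 hjA)]
  · intro A hA B hB hAB
    rw [Finset.mem_coe, Finset.mem_powersetCard] at hA hB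
    have hjA : j ∉ A := fun h => (Finset.notMem_erase j s) (hA.1 h)
    have hjB : j ∉ B := fun h => (Finset.notMem_erase j s) (hB.1 h)
    rw [← Finset.erase_insert hjA, ← Finset.erase_insert hjB, hAB]
  · rw [Finset.disjoint_left]
    intro A hA hA'
    rw [Finset.mem_powersetCard] at hA
    rw [Finset.mem_image] at hA'
    obtain ⟨B, _, rfl⟩ := hA'
    exact (Finset.notMem_erase j s) (hA.1 (Finset.mem_insert_self j B))

lemma esymmOn_erase_s2 [Fintype ι] (t : ι → R) (j : ι) (k : ℕ) :
    esymmOn (Finset.univ.erase j) t k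
      = ∑ l ∈ Finset.range (k + 1), (-1) ^ l * esymmOn Finset.univ t (k - l) * t j ^ l := by
  induction k with
  | zero => simp [esymmOn_zero]
  | succ k ih =>
    have h := esymmOn_rec (s := (Finset.univ : Finset ι)) (Finset.mem_univ j) t k
    have hs : ∑ i ∈ Finset.range (k + 1),
          (-1 : R) ^ (i + 1) * esymmOn Finset.univ t (k + 1 - (i + 1)) * t j ^ (i + 1)
        = -(t j * ∑ l ∈ Finset.range (k + 1),
            (-1 : R) ^ l * esymmOn Finset.univ t (k - l) * t j ^ l) := by
      rw [Finset.mul_sum, ← Finset.sum_neg_distrib]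
      refine Finset.sum_congr rfl fun i _ => ?_
      rw [Nat.succ_sub_succ]
      ring
    rw [Finset.sum_range_succ' _ (k + 1), hs]
    simp only [pow_zero, Nat.sub_zero, mul_one]
    rw [← ih, h]
    ring

end helper

open Matrix in
/-- the determinant of the `n×n` matrix with `(i,j)` entry `e_{i−1}(t̂_j)`
equals the Vandermonde product `∏_{i<j} (t_i − t_j)`. -/
theorem det_esymm_matrix {R : Type*} [CommRing R] {n : ℕ} (t : Fin n → R) :
    (Matrix.of fun i j : Fin n => esymmOn (Finset.univ.erase j) t i.val).det
      = ∏ j : Fin n, ∏ i ∈ Finset.Iio j, (t i - t j) := by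
  classical
  set A : Matrix (Fin n) (Fin n) R :=
    Matrix.of fun i l : Fin n =>
      if (l : ℕ) ≤ (i : ℕ) then (-1) ^ (l : ℕ) * esymmOn Finset.univ t (i - l) else 0 with hA
  have hM : (Matrix.of fun i j : Fin n => esymmOn (Finset.univ.erase j) t i.val)
      = A * (vandermonde t)ᵀ := by
    ext i j
    rw [Matrix.mul_apply]
    simp only [Matrix.of_apply, Matrix.transpose_apply, vandermonde_apply, hA]
    rw [esymmOn_erase_s2, Fin.sum_univ_eq_sum_range
      (fun l => (if l ≤ (i : ℕ) then (-1) ^ l * esymmOn Finset.univ t (i - l) else 0) * t j ^ l)]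
    rw [← Finset.sum_subset (Finset.range_subset_range.2 i.isLt)]
    · refine Finset.sum_congr rfl fun l hl => ?_
      rw [Finset.mem_range, Nat.lt_succ_iff] at hl
      rw [if_pos hl]
    · intro l _ hl
      rw [Finset.mem_range, Nat.lt_succ_iff] at hl
      rw [if_neg hl, zero_mul]
  have hAdet : A.det = ∏ i : Fin n, (-1 : R) ^ (i : ℕ) := by
    rw [Matrix.det_of_lowerTriangular A (fun i l (h : i < l) => by
      simp only [hA, Matrix.of_apply]; rw [if_neg (by omega)])]
    refine Finset.prod_congr rfl fun i _ => ?_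
    simp [hA, esymmOn_zero]
  rw [hM, Matrix.det_mul, Matrix.det_transpose, det_vandermonde, hAdet]
  have hRHS : ∀ j : Fin n, ∏ i ∈ Finset.Iio j, (t i - t j)
      = (-1 : R) ^ (j : ℕ) * ∏ i ∈ Finset.Iio j, (t j - t i) := by
    intro j
    rw [← Fin.card_Iio j, ← Finset.prod_const, ← Finset.prod_mul_distrib]
    exact Finset.prod_congr rfl fun i _ => by ring
  rw [Finset.prod_congr rfl fun j _ => hRHS j, Finset.prod_mul_distrib]
  congr 1
  exact (Finset.prod_comm' (by simp)).symm
end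

section
/- Let R be a commutative ring, q ∈ R an invertible element, and μ_1, …, μ_p ∈ R. Let M be the p×p matrix with entries M_{k,1} = q^{2(1−k)} e_{k−1}(μ̂_1) and M_{k,j} = e_{k−1}(μ̂_j) for 2 ≤ j ≤ p, where 1 ≤ k ≤ p. Then det M = q^{(p−1)(p−2)} · ∏_{1≤a<b≤p}(ν_a − ν_b), where ν_1 = μ_1 and ν_j = q⁻²μ_j for 2 ≤ j ≤ p. -/
set_option linter.unusedSectionVars false

open Finset

section SymmLemmas

variable {S : Type*} [CommRing S] {ι : Type*}

lemma esymmOn_zero_s5 (A : Finset ι) (y : ι → S) : esymmOn A y 0 = 1 := by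
  simp [esymmOn]

lemma prod_add_esymmOn (A : Finset ι) (y : ι → S) (s : S) :
    ∏ l ∈ A, (s + y l) =
      ∑ k ∈ Finset.range (A.card + 1), esymmOn A y k * s ^ (A.card - k) := by
  have h := congrArg (Polynomial.eval s) (Multiset.prod_X_add_C_eq_sum_esymm (A.val.map y))
  rw [Polynomial.eval_multiset_prod] at h
  rw [Multiset.map_map] at h
  simp only [Function.comp, Polynomial.eval_add, Polynomial.eval_X, Polynomial.eval_C] at h
  rw [Polynomial.eval_finset_sum] at h
  simp only [Polynomial.eval_mul, Polynomial.eval_C, Polynomial.eval_pow, Polynomial.eval_X,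
    Multiset.card_map] at h
  have hL : ∏ l ∈ A, (s + y l) = ((A.val.map fun l => s + y l)).prod := by
    rw [Finset.prod_eq_multiset_prod]
  rw [hL]
  have hmap : (A.val.map fun l => s + y l) = (A.val.map y).map fun r => s + r := by
    rw [Multiset.map_map]; rfl
  rw [hmap, h]
  refine Finset.sum_congr rfl fun k _ => ?_
  rw [esymmOn, ← Finset.esymm_map_val]
  rfl

lemma esymmOn_mul_left (A : Finset ι) (y : ι → S) (c : S) (k : ℕ) :
    esymmOn A (fun l => c * y l) k = c ^ k * esymmOn A y k := by
  unfold esymmOn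
  rw [Finset.mul_sum]
  refine Finset.sum_congr rfl fun t ht => ?_
  rw [Finset.prod_mul_distrib, Finset.prod_const, (Finset.mem_powersetCard.mp ht).2]

lemma prod_sub_esymmOn (A : Finset ι) (y : ι → S) (c s : S) :
    ∏ l ∈ A, (s - c * y l) =
      ∑ k ∈ Finset.range (A.card + 1), (-1 : S) ^ k * c ^ k * esymmOn A y k * s ^ (A.card - k) := by
  have h := prod_add_esymmOn A (fun l => -c * y l) s
  have h2 : ∀ k, esymmOn A (fun l => -c * y l) k = (-1 : S) ^ k * c ^ k * esymmOn A y k := by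
    intro k
    rw [esymmOn_mul_left A y (-c) k, neg_pow, mul_assoc]
  calc ∏ l ∈ A, (s - c * y l) = ∏ l ∈ A, (s + -c * y l) := by
        refine Finset.prod_congr rfl fun l _ => by ring
    _ = _ := by
        rw [h]
        exact Finset.sum_congr rfl fun k _ => by rw [h2]

lemma esymmOn_insert_s5 [DecidableEq ι] {a : ι} {A : Finset ι} (h : a ∉ A) (y : ι → S) (k : ℕ) :
    esymmOn (insert a A) y (k + 1) = esymmOn A y (k + 1) + y a * esymmOn A y k := by
  unfold esymmOn
  rw [Finset.powersetCard_succ_insert h]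
  rw [Finset.sum_union]
  · congr 1
    rw [Finset.sum_image, Finset.mul_sum]
    · refine Finset.sum_congr rfl fun t ht => ?_
      have hat : a ∉ t := fun hat =>
        h ((Finset.mem_powersetCard.mp ht).1 hat)
      rw [Finset.prod_insert hat]
    · intro t1 ht1 t2 ht2 heq
      have h1 : a ∉ t1 := fun hat => h ((Finset.mem_powersetCard.mp ht1).1 hat)
      have h2 : a ∉ t2 := fun hat => h ((Finset.mem_powersetCard.mp ht2).1 hat)
      have := congrArg (fun s => Finset.erase s a) heq
      simpa [Finset.erase_insert h1, Finset.erase_insert h2] using this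
  · rw [Finset.disjoint_left]
    intro t ht hti
    obtain ⟨u, hu, rfl⟩ := Finset.mem_image.mp hti
    exact h ((Finset.mem_powersetCard.mp ht).1 (Finset.mem_insert_self a u))

-- the alternating-sum identity: ∑_{m=0}^{n} e_{n-m}(all) (-x_j)^m = e_n(x omitting j)
lemma sum_esymmOn_erase {p : ℕ} (x : Fin p → S) (j : Fin p) (n : ℕ) :
    ∑ m ∈ Finset.range (n + 1), esymmOn Finset.univ x (n - m) * (-x j) ^ m =
      esymmOn (Finset.univ.erase j) x n := by
  induction n with
  | zero => simp [esymmOn_zero_s5]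
  | succ n ih =>
    rw [Finset.sum_range_succ']
    have key : ∀ m ∈ Finset.range (n + 1),
        esymmOn Finset.univ x (n + 1 - (m + 1)) * (-x j) ^ (m + 1) =
          (-x j) * (esymmOn Finset.univ x (n - m) * (-x j) ^ m) := by
      intro m _
      rw [Nat.succ_sub_succ]
      ring
    rw [Finset.sum_congr rfl key, ← Finset.mul_sum, ih]
    have hins : (Finset.univ : Finset (Fin p)) = insert j (Finset.univ.erase j) :=
      (Finset.insert_erase (Finset.mem_univ j)).symm
    rw [Nat.sub_zero, pow_zero, mul_one]
    nth_rewrite 2 [hins]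
    rw [esymmOn_insert_s5 (Finset.notMem_erase j _) x n]
    ring

end SymmLemmas



section MatrixLemmas

variable {S : Type*} [CommRing S] {p : ℕ}

/-- the matrix of the theorem, column 0 rescaled by powers of `c`. -/
def McolMat (x : Fin p → S) (c : S) : Matrix (Fin p) (Fin p) S :=
  Matrix.of fun k j =>
    (if j.val = 0 then c ^ k.val else 1) * esymmOn (Finset.univ.erase j) x k.val

/-- the "evaluation" matrix. -/
def PevalMat (x : Fin p → S) : Matrix (Fin p) (Fin p) S :=
  Matrix.of fun i k => (-1 : S) ^ k.val * x i ^ (p - 1 - k.val)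

lemma card_erase_univ (j : Fin p) : (Finset.univ.erase j).card = p - 1 := by
  rw [Finset.card_erase_of_mem (Finset.mem_univ j), Finset.card_univ, Fintype.card_fin]

lemma PevalMat_mul_McolMat (x : Fin p → S) (c : S) (i j : Fin p) :
    (PevalMat x * McolMat x c) i j =
      ∏ l ∈ Finset.univ.erase j, (x i - (if j.val = 0 then c else 1) * x l) := by
  have hp : 0 < p := j.pos
  set c' : S := if j.val = 0 then c else 1 with hc'
  rw [Matrix.mul_apply]
  have hterm : ∀ k : Fin p,
      PevalMat x i k * McolMat x c k j =
        (-1 : S) ^ k.val * c' ^ k.val * esymmOn (Finset.univ.erase j) x k.val *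
          x i ^ (p - 1 - k.val) := by
    intro k
    simp only [PevalMat, McolMat, Matrix.of_apply]
    have : (if j.val = 0 then c ^ k.val else 1) = c' ^ k.val := by
      rw [hc']; split_ifs <;> simp
    rw [this]; ring
  rw [Finset.sum_congr rfl fun k _ => hterm k]
  rw [Fin.sum_univ_eq_sum_range
    (fun k => (-1 : S) ^ k * c' ^ k * esymmOn (Finset.univ.erase j) x k * x i ^ (p - 1 - k)) p]
  rw [prod_sub_esymmOn (Finset.univ.erase j) x c' (x i), card_erase_univ]
  rw [Nat.sub_add_cancel hp]

lemma PevalMat_mul_McolMat_offdiag (x : Fin p → S) (c : S) (i j : Fin p)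
    (hj : j.val ≠ 0) (hij : i ≠ j) :
    (PevalMat x * McolMat x c) i j = 0 := by
  rw [PevalMat_mul_McolMat]
  refine Finset.prod_eq_zero (Finset.mem_erase.mpr ⟨hij, Finset.mem_univ i⟩) ?_
  rw [if_neg hj, one_mul, sub_self]

/-- determinant of a matrix which is diagonal outside column 0. -/
lemma det_diag_except_col0 (N : Matrix (Fin p) (Fin p) S)
    (h : ∀ i j : Fin p, j.val ≠ 0 → i ≠ j → N i j = 0) :
    N.det = ∏ i : Fin p, N i i := by
  have hdet := Matrix.det_submatrix_equiv_self (Fin.revPerm : Fin p ≃ Fin p) N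
  have htri : (N.submatrix Fin.revPerm Fin.revPerm).BlockTriangular id := by
    intro i j hij
    simp only [id] at hij
    simp only [Matrix.submatrix_apply]
    simp only [Fin.revPerm_apply]
    refine h _ _ ?_ ?_
    · rw [Fin.val_rev]
      have hi : j.val < i.val := hij
      have hip := i.isLt
      omega
    · exact fun hc => (ne_of_gt hij) (Fin.rev_injective hc)
  rw [← hdet, Matrix.det_of_upperTriangular htri]
  calc ∏ i : Fin p, N.submatrix Fin.revPerm Fin.revPerm i i
      = ∏ i : Fin p, N (Fin.revPerm i) (Fin.revPerm i) := rfl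
    _ = ∏ i : Fin p, N i i := Equiv.prod_comp Fin.revPerm (fun i => N i i)

/-- the unipotent triangular matrix of full elementary symmetric functions. -/
def EunipMat (x : Fin p → S) : Matrix (Fin p) (Fin p) S :=
  Matrix.of fun k m =>
    if m.val ≤ k.val then esymmOn Finset.univ x (k.val - m.val) else 0

/-- transposed Vandermonde in `-x`. -/
def VvdmMat (x : Fin p → S) : Matrix (Fin p) (Fin p) S :=
  Matrix.of fun m j => (-x j) ^ m.val

lemma det_EunipMat (x : Fin p → S) : (EunipMat x).det = 1 := by
  have htri : (EunipMat x).BlockTriangular OrderDual.toDual := by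
    intro i j hij
    have : i.val < j.val := hij
    simp only [EunipMat, Matrix.of_apply]
    rw [if_neg (by omega)]
  rw [Matrix.det_of_lowerTriangular _ htri]
  refine Finset.prod_eq_one fun i _ => ?_
  simp [EunipMat, esymmOn_zero_s5]

lemma det_VvdmMat (x : Fin p → S) :
    (VvdmMat x).det = ∏ i : Fin p, ∏ j ∈ Finset.Ioi i, (x i - x j) := by
  have : VvdmMat x = (Matrix.vandermonde (fun j => -x j)).transpose := by
    ext m j; simp [VvdmMat, Matrix.vandermonde, Matrix.transpose_apply]
  rw [this, Matrix.det_transpose, Matrix.det_vandermonde]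
  refine Finset.prod_congr rfl fun i _ => Finset.prod_congr rfl fun j _ => by ring

lemma EunipMat_mul_VvdmMat (x : Fin p → S) :
    EunipMat x * VvdmMat x = McolMat x 1 := by
  ext k j
  rw [Matrix.mul_apply]
  have hterm : ∀ m : Fin p,
      EunipMat x k m * VvdmMat x m j =
        (fun n => (if n ≤ k.val then esymmOn Finset.univ x (k.val - n) else 0) * (-x j) ^ n)
          m.val := by
    intro m; simp [EunipMat, VvdmMat, ite_mul]
  have step1 : ∑ m : Fin p, EunipMat x k m * VvdmMat x m j =
      ∑ n ∈ Finset.range p,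
        (if n ≤ k.val then esymmOn Finset.univ x (k.val - n) else 0) * (-x j) ^ n := by
    rw [← Fin.sum_univ_eq_sum_range]
    exact Finset.sum_congr rfl fun m _ => hterm m
  rw [step1]
  have hsub : Finset.range (k.val + 1) ⊆ Finset.range p := by
    intro a ha
    simp only [Finset.mem_range] at *
    exact lt_of_lt_of_le ha k.isLt
  rw [← Finset.sum_subset hsub (fun a _ ha => by
    rw [if_neg fun h => ha (Finset.mem_range.mpr (Nat.lt_succ_of_le h)), zero_mul])]
  rw [Finset.sum_congr rfl (fun a ha => by
    rw [if_pos (by simpa [Nat.lt_succ_iff] using ha)])]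
  rw [sum_esymmOn_erase x j k.val]
  simp [McolMat]

lemma det_McolMat_one (x : Fin p → S) :
    (McolMat x 1).det = ∏ i : Fin p, ∏ j ∈ Finset.Ioi i, (x i - x j) := by
  rw [← EunipMat_mul_VvdmMat, Matrix.det_mul, det_EunipMat, one_mul, det_VvdmMat]

end MatrixLemmas



section Cancel

variable {S : Type*} [CommRing S] {p : ℕ} [NeZero p]

lemma val_ne_zero_of_ne {j : Fin p} (h : j ≠ 0) : j.val ≠ 0 := by
  exact Fin.val_ne_zero_iff.mpr h

lemma detP_mul_detM (x : Fin p → S) (c : S) :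
    (PevalMat x).det * (McolMat x c).det =
      (∏ l ∈ Finset.univ.erase 0, (x 0 - c * x l)) *
        ∏ i ∈ Finset.univ.erase 0, ∏ l ∈ Finset.univ.erase i, (x i - x l) := by
  rw [← Matrix.det_mul]
  rw [det_diag_except_col0 _ (fun i j hj hij => PevalMat_mul_McolMat_offdiag x c i j hj hij)]
  rw [← Finset.mul_prod_erase Finset.univ _ (Finset.mem_univ (0 : Fin p))]
  congr 1
  · rw [PevalMat_mul_McolMat x c 0 0]
    refine Finset.prod_congr rfl fun l _ => ?_
    rw [if_pos (Fin.val_zero p)]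
  · refine Finset.prod_congr rfl fun i hi => ?_
    rw [PevalMat_mul_McolMat x c i i]
    refine Finset.prod_congr rfl fun l _ => ?_
    rw [if_neg (val_ne_zero_of_ne (Finset.mem_erase.mp hi).1), one_mul]

lemma detP_mul_detM_one (x : Fin p → S) :
    (PevalMat x).det * (McolMat x 1).det =
      ∏ i : Fin p, ∏ l ∈ Finset.univ.erase i, (x i - x l) := by
  rw [← Matrix.det_mul]
  rw [det_diag_except_col0 _ (fun i j hj hij => PevalMat_mul_McolMat_offdiag x 1 i j hj hij)]
  refine Finset.prod_congr rfl fun i _ => ?_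
  rw [PevalMat_mul_McolMat x 1 i i]
  refine Finset.prod_congr rfl fun l _ => ?_
  rw [ite_self, one_mul]

lemma Ioi_zero_eq_erase : (Finset.Ioi (0 : Fin p)) = Finset.univ.erase 0 := by
  ext j
  simp [Finset.mem_Ioi, Finset.mem_erase, Fin.pos_iff_ne_zero']

end Cancel

section PolyRing

variable {p : ℕ} [NeZero p]

noncomputable def xL {p : ℕ} : Fin p → MvPolynomial (Fin (p + 1)) ℤ :=
  fun i => MvPolynomial.X i.castSucc

noncomputable def cL {p : ℕ} : MvPolynomial (Fin (p + 1)) ℤ := MvPolynomial.X (Fin.last p)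

lemma key_L :
    (McolMat (xL (p := p)) cL).det =
      (∏ l ∈ Finset.univ.erase 0, (xL 0 - cL * xL l)) *
        ∏ i ∈ Finset.univ.erase 0, ∏ j ∈ Finset.Ioi i, (xL (p := p) i - xL j) := by
  have hx : ∀ i l : Fin p, i ≠ l → xL (p := p) i - xL l ≠ 0 := fun i l h =>
    sub_ne_zero.mpr (MvPolynomial.X_injective.ne ((Fin.castSucc_injective p).ne h))
  set D : Fin p → MvPolynomial (Fin (p + 1)) ℤ := fun i => ∏ l ∈ Finset.univ.erase i, (xL (p := p) i - xL l) with hDdef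
  have hD : ∀ i, D i ≠ 0 := fun i =>
    Finset.prod_ne_zero_iff.mpr fun l hl => hx i l (Finset.mem_erase.mp hl).1.symm
  set detP := (PevalMat (xL (p := p))).det with hdetP
  set vdm' := ∏ i ∈ Finset.univ.erase (0 : Fin p), ∏ j ∈ Finset.Ioi i, (xL (p := p) i - xL j)
    with hvdm'
  set B0 := ∏ l ∈ Finset.univ.erase (0 : Fin p), (xL (p := p) 0 - cL * xL l) with hB0
  have e1 : detP * (McolMat (xL (p := p)) cL).det = B0 * ∏ i ∈ Finset.univ.erase 0, D i :=
    detP_mul_detM _ _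
  have e2 : detP * (McolMat (xL (p := p)) 1).det = ∏ i : Fin p, D i :=
    detP_mul_detM_one _
  have hfull : ∏ i : Fin p, D i = D 0 * ∏ i ∈ Finset.univ.erase 0, D i :=
    (Finset.mul_prod_erase Finset.univ D (Finset.mem_univ 0)).symm
  have e3 : (McolMat (xL (p := p)) 1).det = D 0 * vdm' := by
    rw [det_McolMat_one]
    rw [← Finset.mul_prod_erase Finset.univ _ (Finset.mem_univ (0 : Fin p))]
    congr 1
    rw [hDdef]
    simp only []
    rw [Ioi_zero_eq_erase]
  have hPne : detP ≠ 0 := by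
    intro h
    rw [h, zero_mul] at e2
    exact (Finset.prod_ne_zero_iff.mpr fun i _ => hD i) e2.symm
  have goal2 : detP * ((McolMat (xL (p := p)) cL).det * D 0) = detP * ((B0 * vdm') * D 0) := by
    calc detP * ((McolMat (xL (p := p)) cL).det * D 0)
        = (detP * (McolMat (xL (p := p)) cL).det) * D 0 := by ring
      _ = (B0 * ∏ i ∈ Finset.univ.erase 0, D i) * D 0 := by rw [e1]
      _ = B0 * (D 0 * ∏ i ∈ Finset.univ.erase 0, D i) := by ring
      _ = B0 * (∏ i : Fin p, D i) := by rw [← hfull]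
      _ = B0 * (detP * (McolMat (xL (p := p)) 1).det) := by rw [e2]
      _ = B0 * (detP * (D 0 * vdm')) := by rw [e3]
      _ = detP * ((B0 * vdm') * D 0) := by ring
  exact mul_right_cancel₀ (hD 0) (mul_left_cancel₀ hPne goal2)

end PolyRing

lemma map_esymmOn {S T : Type*} [CommRing S] [CommRing T] (f : S →+* T) {ι : Type*}
    (A : Finset ι) (y : ι → S) (k : ℕ) :
    f (esymmOn A y k) = esymmOn A (fun i => f (y i)) k := by
  simp [esymmOn, map_sum, map_prod]

lemma two_mul_sum_pred (p : ℕ) :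
    2 * ∑ m ∈ Finset.range p, (m - 1) = (p - 1) * (p - 2) := by
  induction p with
  | zero => simp
  | succ n ih =>
    rw [Finset.sum_range_succ, Nat.mul_add, ih]
    rcases n with _ | m
    · simp
    rcases m with _ | r
    · simp
    have h1 : r + 1 + 1 - 1 = r + 1 := by omega
    have h2 : r + 1 + 1 - 2 = r := by omega
    have h3 : r + 1 + 1 + 1 - 1 = r + 2 := by omega
    have h4 : r + 1 + 1 + 1 - 2 = r + 1 := by omega
    rw [h1, h2, h3, h4]
    ring

/-- the determinant of the `p×p` matrix whose first column has entries
`q^{2(1−k)} e_{k−1}(μ̂_1)` and whose `j`-th column (`j ≥ 2`) has entries `e_{k−1}(μ̂_j)`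
equals `q^{(p−1)(p−2)} ∏_{a<b}(ν_a − ν_b)`, where `ν_1 = μ_1` and `ν_j = q⁻²μ_j` for
`j ≥ 2`.  Here `q` is an invertible element of the commutative ring `R` with inverse
`qi`, and `q^{2(1−k)}` means `qi^{2(k−1)}`. -/
theorem det_first_column_rescaled {R : Type*} [CommRing R] (q qi : R) (hq : q * qi = 1)
    {p : ℕ} (μ : Fin p → R)
    (ν : Fin p → R) (hν : ∀ j : Fin p, ν j = if j.val = 0 then μ j else qi ^ 2 * μ j) :
    (Matrix.of fun k j : Fin p =>
        if j.val = 0 then qi ^ (2 * k.val) * esymmOn (Finset.univ.erase j) μ k.val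
        else esymmOn (Finset.univ.erase j) μ k.val).det
      = q ^ ((p - 1) * (p - 2)) * ∏ b : Fin p, ∏ a ∈ Finset.Iio b, (ν a - ν b) := by
  rcases Nat.eq_zero_or_pos p with hp | hp
  · subst hp
    simp [Matrix.det_isEmpty]
  haveI : NeZero p := ⟨hp.ne'⟩
  -- Step A: identify the matrix
  have hM : (Matrix.of fun k j : Fin p =>
        if j.val = 0 then qi ^ (2 * k.val) * esymmOn (Finset.univ.erase j) μ k.val
        else esymmOn (Finset.univ.erase j) μ k.val) = McolMat μ (qi ^ 2) := by
    ext k j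
    simp only [Matrix.of_apply, McolMat]
    by_cases h : j.val = 0
    · rw [if_pos h, if_pos h, pow_mul]
    · rw [if_neg h, if_neg h, one_mul]
  rw [hM]
  -- Step B: map the polynomial identity to R
  set φ : MvPolynomial (Fin (p + 1)) ℤ →+* R :=
    (MvPolynomial.aeval (R := ℤ) (Fin.snoc μ (qi ^ 2))).toRingHom with hφdef
  have hφx : ∀ i : Fin p, φ (xL i) = μ i := fun i => by
    simp [hφdef, xL, Fin.snoc_castSucc]
  have hφc : φ cL = qi ^ 2 := by simp [hφdef, cL, Fin.snoc_last]
  have hmap : (McolMat (xL (p := p)) cL).map φ = McolMat μ (qi ^ 2) := by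
    ext k j
    simp only [Matrix.map_apply, McolMat, Matrix.of_apply]
    rw [_root_.map_mul]
    congr 1
    · rw [apply_ite φ, map_pow, hφc, _root_.map_one]
    · rw [map_esymmOn]
      congr 1
      exact funext hφx
  have hkeyR := congrArg φ (key_L (p := p))
  rw [RingHom.map_det, RingHom.mapMatrix_apply, hmap, _root_.map_mul, map_prod, map_prod]
    at hkeyR
  simp only [map_sub, _root_.map_mul, hφx, hφc] at hkeyR
  have hkeyR2 : (McolMat μ (qi ^ 2)).det =
      (∏ l ∈ Finset.univ.erase 0, (μ 0 - qi ^ 2 * μ l)) *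
        ∏ i ∈ Finset.univ.erase 0, ∏ j ∈ Finset.Ioi i, (μ i - μ j) := by
    rw [hkeyR]
    congr 1
    refine Finset.prod_congr rfl fun i _ => ?_
    rw [map_prod]
    exact Finset.prod_congr rfl fun j _ => by rw [map_sub, hφx, hφx]
  rw [hkeyR2]
  -- Step C: compute the RHS
  have step1 : ∀ b : Fin p, ∏ a ∈ Finset.Iio b, (ν a - ν b) =
      (if b.val = 0 then 1 else (μ 0 - qi ^ 2 * μ b)) *
        ((qi ^ 2) ^ (b.val - 1) * ∏ a ∈ (Finset.Iio b).erase 0, (μ a - μ b)) := by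
    intro b
    by_cases hb : b.val = 0
    · have hIio : Finset.Iio b = ∅ := by
        ext a
        simp [Finset.mem_Iio, Fin.lt_def, hb]
      rw [hIio, if_pos hb, hb]
      simp
    · have h0b : (0 : Fin p) < b := by
        rw [Fin.lt_def, Fin.val_zero]
        omega
      have h0mem : (0 : Fin p) ∈ Finset.Iio b := Finset.mem_Iio.mpr h0b
      rw [← Finset.mul_prod_erase _ _ h0mem, if_neg hb]
      congr 1
      · rw [hν 0, hν b, if_pos (Fin.val_zero p), if_neg hb]
      · have hcong : ∀ a ∈ (Finset.Iio b).erase 0, ν a - ν b = qi ^ 2 * (μ a - μ b) := by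
          intro a ha
          obtain ⟨ha0, _⟩ := Finset.mem_erase.mp ha
          rw [hν a, hν b, if_neg (val_ne_zero_of_ne ha0), if_neg hb, mul_sub]
        rw [Finset.prod_congr rfl hcong, Finset.prod_mul_distrib, Finset.prod_const]
        congr 2
        rw [Finset.card_erase_of_mem h0mem, Fin.card_Iio]
  have hprod : ∏ b : Fin p, ∏ a ∈ Finset.Iio b, (ν a - ν b) =
      (∏ b : Fin p, (if b.val = 0 then 1 else (μ 0 - qi ^ 2 * μ b))) *
        ((∏ b : Fin p, (qi ^ 2) ^ (b.val - 1)) *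
          (∏ b : Fin p, ∏ a ∈ (Finset.Iio b).erase 0, (μ a - μ b))) := by
    rw [← Finset.prod_mul_distrib, ← Finset.prod_mul_distrib]
    exact Finset.prod_congr rfl fun b _ => step1 b
  have f1 : (∏ b : Fin p, (if b.val = 0 then 1 else (μ 0 - qi ^ 2 * μ b))) =
      ∏ b ∈ Finset.univ.erase 0, (μ 0 - qi ^ 2 * μ b) := by
    rw [← Finset.prod_erase Finset.univ
      (f := fun b : Fin p => if b.val = 0 then 1 else (μ 0 - qi ^ 2 * μ b)) (a := 0)
      (by simp [Fin.val_zero])]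
    refine Finset.prod_congr rfl fun b hb => ?_
    rw [if_neg (val_ne_zero_of_ne (Finset.mem_erase.mp hb).1)]
  have f2 : (∏ b : Fin p, (qi ^ 2) ^ (b.val - 1)) = qi ^ ((p - 1) * (p - 2)) := by
    rw [Finset.prod_pow_eq_pow_sum]
    rw [Fin.sum_univ_eq_sum_range (fun m => m - 1) p]
    rw [← pow_mul, two_mul_sum_pred]
  have f3 : (∏ b : Fin p, ∏ a ∈ (Finset.Iio b).erase 0, (μ a - μ b)) =
      ∏ i ∈ Finset.univ.erase 0, ∏ j ∈ Finset.Ioi i, (μ i - μ j) := by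
    refine Finset.prod_comm' ?_
    intro b a
    simp only [Finset.mem_univ, Finset.mem_erase, Finset.mem_Iio, Finset.mem_Ioi, true_and,
      and_true]
    tauto
  rw [hprod, f1, f2, f3]
  have hpow : q ^ ((p - 1) * (p - 2)) * qi ^ ((p - 1) * (p - 2)) = 1 := by
    rw [← mul_pow, hq, one_pow]
  have hre : q ^ ((p - 1) * (p - 2)) *
      ((∏ b ∈ Finset.univ.erase 0, (μ 0 - qi ^ 2 * μ b)) *
        (qi ^ ((p - 1) * (p - 2)) *
          ∏ i ∈ Finset.univ.erase 0, ∏ j ∈ Finset.Ioi i, (μ i - μ j))) =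
      (q ^ ((p - 1) * (p - 2)) * qi ^ ((p - 1) * (p - 2))) *
        ((∏ b ∈ Finset.univ.erase 0, (μ 0 - qi ^ 2 * μ b)) *
          ∏ i ∈ Finset.univ.erase 0, ∏ j ∈ Finset.Ioi i, (μ i - μ j)) := by ring
  rw [hre, hpow, one_mul]
end

section
/- Let K be a field, q ∈ K an invertible element with q² ≠ 1, η ∈ K, p ≥ 1, λ ∈ ℤᵖ and k ∈ ℤᵖ. Set A_i = λ_{p+1−i} + i and μ_i = η·q^{−2A_i} for 1 ≤ i ≤ p. Then for all 1 ≤ i, j ≤ p: (q^{k_i−k_j}·μ_i − q^{k_j−k_i}·μ_j) · (A_j − A_i)_q = (μ_i − μ_j) · (A_j − A_i + k_i − k_j)_q. In particular, if μ_i ≠ μ_j then (q^{k_i−k_j}μ_i − q^{k_j−k_i}μ_j)/(μ_i − μ_j) = (λ_{p+1−j} − λ_{p+1−i} + k_i − k_j − i + j)_q / (λ_{p+1−j} − λ_{p+1−i} − i + j)_q. -/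
private lemma qmf_aux {K : Type*} [Field K] (q η : K) (hq0 : q ≠ 0) (ai aj b c : ℤ) :
    (q ^ (b - c) * (η * q ^ (-(2 * ai))) - q ^ (c - b) * (η * q ^ (-(2 * aj))))
        * (q ^ (aj - ai) - q ^ (-(aj - ai)))
      = (η * q ^ (-(2 * ai)) - η * q ^ (-(2 * aj)))
        * (q ^ (aj - ai + (b - c)) - q ^ (-(aj - ai + (b - c)))) := by
  have comb2 : ∀ x y : ℤ, q ^ x * (η * q ^ y) = η * q ^ (x + y) := by
    intro x y; rw [zpow_add₀ hq0]; ring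
  have comb : ∀ x y : ℤ, (η * q ^ x) * q ^ y = η * q ^ (x + y) := by
    intro x y; rw [zpow_add₀ hq0]; ring
  simp only [comb2, sub_mul, mul_sub, comb]
  rw [show b - c + -(2*ai) + (aj - ai) = -(2*ai) + (aj - ai + (b - c)) from by ring,
      show b - c + -(2*ai) + -(aj - ai) = -(2*aj) + (aj - ai + (b - c)) from by ring,
      show c - b + -(2*aj) + (aj - ai) = -(2*ai) + -(aj - ai + (b - c)) from by ring,
      show c - b + -(2*aj) + -(aj - ai) = -(2*aj) + -(aj - ai + (b - c)) from by ring]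
  ring

/-- with `A_i = λ_{p+1−i} + i` and `μ_i = η q^{−2A_i}`, one has
`(q^{k_i−k_j}μ_i − q^{k_j−k_i}μ_j)(A_j − A_i)_q = (μ_i − μ_j)(A_j − A_i + k_i − k_j)_q`;
in particular, if `μ_i ≠ μ_j` then `(q^{k_i−k_j}μ_i − q^{k_j−k_i}μ_j)/(μ_i − μ_j)
  = (λ_{p+1−j} − λ_{p+1−i} + k_i − k_j − i + j)_q / (λ_{p+1−j} − λ_{p+1−i} − i + j)_q`. -/
theorem quantum_multiplicity_factor {K : Type*} [Field K] (q : K) (hq0 : q ≠ 0)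
    (hq2 : q ^ 2 ≠ 1) (η : K) {p : ℕ} (hp : 1 ≤ p) (lam k : Fin p → ℤ)
    (A : Fin p → ℤ) (hA : ∀ i, A i = lam (Fin.rev i) + (((i : ℕ) : ℤ) + 1))
    (μ : Fin p → K) (hμ : ∀ i, μ i = η * q ^ (-(2 * A i))) :
    ∀ i j : Fin p,
      (q ^ (k i - k j) * μ i - q ^ (k j - k i) * μ j) * qnum q (A j - A i)
          = (μ i - μ j) * qnum q (A j - A i + (k i - k j))
      ∧ (μ i ≠ μ j →
          (q ^ (k i - k j) * μ i - q ^ (k j - k i) * μ j) / (μ i - μ j)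
            = qnum q (lam (Fin.rev j) - lam (Fin.rev i) + k i - k j - (i : ℕ) + (j : ℕ))
              / qnum q (lam (Fin.rev j) - lam (Fin.rev i) - (i : ℕ) + (j : ℕ))) := by
  intro i j
  have key : (q ^ (k i - k j) * μ i - q ^ (k j - k i) * μ j)
        * (q ^ (A j - A i) - q ^ (-(A j - A i)))
      = (μ i - μ j)
        * (q ^ (A j - A i + (k i - k j)) - q ^ (-(A j - A i + (k i - k j)))) := by
    rw [hμ i, hμ j]
    exact qmf_aux q η hq0 (A i) (A j) (k i) (k j)
  have part1 : (q ^ (k i - k j) * μ i - q ^ (k j - k i) * μ j) * qnum q (A j - A i)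
      = (μ i - μ j) * qnum q (A j - A i + (k i - k j)) := by
    simp only [qnum, ← mul_div_assoc, key]
  refine ⟨part1, fun hne => ?_⟩
  have hden : q - q⁻¹ ≠ 0 := by
    intro h
    apply hq2
    have h2 : q * (q - q⁻¹) = q ^ 2 - 1 := by field_simp
    have h3 : q ^ 2 - 1 = 0 := by rw [← h2, h, mul_zero]
    linear_combination h3
  have hnum : q ^ (A j - A i) - q ^ (-(A j - A i)) ≠ 0 := by
    intro h
    apply hne
    have hqq : q ^ (A j - A i) = q ^ (-(A j - A i)) := by linear_combination h
    have h3 : q ^ (A j - A i) * q ^ (-(A i + A j))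
        = q ^ (-(A j - A i)) * q ^ (-(A i + A j)) := by rw [hqq]
    rw [← zpow_add₀ hq0, ← zpow_add₀ hq0,
      show A j - A i + -(A i + A j) = -(2 * A i) from by ring,
      show -(A j - A i) + -(A i + A j) = -(2 * A j) from by ring] at h3
    rw [hμ i, hμ j, h3]
  have hq1 : qnum q (A j - A i) ≠ 0 := by
    simp only [qnum]
    exact div_ne_zero hnum hden
  have hμne : μ i - μ j ≠ 0 := sub_ne_zero_of_ne hne
  have exp1 : A j - A i + (k i - k j)
      = lam (Fin.rev j) - lam (Fin.rev i) + k i - k j - (i : ℕ) + (j : ℕ) := by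
    rw [hA i, hA j]; ring
  have exp2 : A j - A i = lam (Fin.rev j) - lam (Fin.rev i) - (i : ℕ) + (j : ℕ) := by
    rw [hA i, hA j]; ring
  rw [← exp1, ← exp2, div_eq_div_iff hμne hq1]
  linear_combination part1
end

section
/- Let K be a field, q ∈ K an invertible element with q² ≠ 1, p ≥ 2, and k = (k_1, …, k_p) ∈ ℤᵖ with m = Σ_{i=1}^p k_i. Define ξ_p(k_1,…,k_p) = Σ_{s=2}^p q^{k_1+⋯+k_s−m} · (k_s)_q · (k_1+⋯+k_{s−1})_q. Then ξ_p is a symmetric function of its arguments: for every permutation τ of {1,…,p}, ξ_p(k_{τ(1)},…,k_{τ(p)}) = ξ_p(k_1,…,k_p). -/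
open Finset

theorem sum_sub_telescope_filter_le_filter_lt {ι M G : Type*} [LinearOrder ι]
    [AddCommMonoid M] [AddCommGroup G] (f : M → G) (k : ι → M) (T : Finset ι) :
    ∑ s ∈ T, (f (∑ t ∈ T with t ≤ s, k t) - f (∑ t ∈ T with t < s, k t))
      = f (∑ t ∈ T, k t) - f 0 := by
  induction T using induction_on_max with
  | empty => simp
  | insert a T hlt ih =>
    have haT : a ∉ T := fun h => lt_irrefl a (hlt a h)
    have hrest : ∑ s ∈ T, (f (∑ t ∈ insert a T with t ≤ s, k t)
        - f (∑ t ∈ insert a T with t < s, k t))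
        = ∑ s ∈ T, (f (∑ t ∈ T with t ≤ s, k t) - f (∑ t ∈ T with t < s, k t)) := by
      refine sum_congr rfl fun s hs => ?_
      rw [filter_insert, if_neg (hlt s hs).not_ge, filter_insert, if_neg (hlt s hs).not_gt]
    have htop_le : ({t ∈ insert a T | t ≤ a} : Finset ι) = insert a T :=
      filter_true_of_mem fun t ht => by
        rcases mem_insert.1 ht with rfl | ht
        exacts [le_rfl, (hlt t ht).le]
    have htop_lt : ({t ∈ insert a T | t < a} : Finset ι) = T := by
      rw [filter_insert, if_neg (lt_irrefl a), filter_true_of_mem hlt]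
    rw [sum_insert haT, hrest, ih, htop_le, htop_lt]
    abel

section

variable {K : Type*} [Field K] {q : K}

theorem zpow_mul_qnum_mul_qnum (hq : q ≠ 0) (hq2 : q ^ 2 ≠ 1) (a b m : ℤ) :
    (q - q⁻¹) ^ 2 * (q ^ (a + b - m) * qnum q a * qnum q b)
      = (q ^ (2 * (a + b) - m) - q ^ (2 * b - m)) + (q ^ (-m) - q ^ (2 * a - m)) := by
  simp only [qnum, zpow_sub₀ hq, zpow_add₀ hq, mul_comm (2 : ℤ), zpow_mul, zpow_neg]
  have : q ^ 2 - 1 ≠ 0 := sub_ne_zero.2 hq2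
  field_simp
  ring

theorem sq_sub_inv_mul_xi_sum (hq : q ≠ 0) (hq2 : q ^ 2 ≠ 1) {p : ℕ} (k : Fin p → ℤ) :
    (q - q⁻¹) ^ 2 * ∑ s ∈ univ.filter (fun s : Fin p => 1 ≤ (s : ℕ)),
        q ^ ((∑ t ∈ Iic s, k t) - ∑ t, k t) * qnum q (k s) * qnum q (∑ t ∈ Iio s, k t)
      = q ^ (∑ t, k t) + ((p : K) - 1) * q ^ (-∑ t, k t) - ∑ s, q ^ (2 * k s - ∑ t, k t) := by
  set m := ∑ t, k t
  have hfull : ∑ s ∈ univ.filter (fun s : Fin p => 1 ≤ (s : ℕ)),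
      q ^ ((∑ t ∈ Iic s, k t) - m) * qnum q (k s) * qnum q (∑ t ∈ Iio s, k t)
      = ∑ s, q ^ ((∑ t ∈ Iic s, k t) - m) * qnum q (k s) * qnum q (∑ t ∈ Iio s, k t) := by
    refine sum_filter_of_ne fun s _ hs => ?_
    by_contra h0
    have : Iio s = ∅ := eq_empty_of_forall_notMem fun t ht => by
      have := Fin.lt_def.1 (mem_Iio.1 ht)
      omega
    simp [this, qnum] at hs
  have hterm : ∀ s : Fin p,
      (q - q⁻¹) ^ 2 * (q ^ ((∑ t ∈ Iic s, k t) - m) * qnum q (k s) * qnum q (∑ t ∈ Iio s, k t))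
      = (q ^ (2 * ∑ t ∈ univ with t ≤ s, k t - m) - q ^ (2 * ∑ t ∈ univ with t < s, k t - m))
        + (q ^ (-m) - q ^ (2 * k s - m)) := by
    intro s
    rw [filter_ge_eq_Iic, filter_gt_eq_Iio, ← sum_Iio_add_eq_sum_Iic, add_comm]
    exact zpow_mul_qnum_mul_qnum hq hq2 _ _ _
  rw [hfull, mul_sum, sum_congr rfl fun s _ => hterm s, sum_add_distrib,
    sum_sub_telescope_filter_le_filter_lt (fun x => q ^ (2 * x - m)), sum_sub_distrib]
  have h2m : 2 * ∑ t, k t - m = m := by rw [two_mul, add_sub_cancel_right]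
  simp only [h2m, sum_const, card_univ, Fintype.card_fin, nsmul_eq_mul, mul_zero, zero_sub]
  ring
end

theorem xi_symmetric_general {K : Type*} [Field K] (q : K) (hq0 : q ≠ 0) (hq2 : q ^ 2 ≠ 1)
    {p : ℕ}
    (ξ : (Fin p → ℤ) → K)
    (hξ : ∀ k : Fin p → ℤ,
      ξ k = ∑ s ∈ Finset.univ.filter (fun s : Fin p => 1 ≤ (s : ℕ)),
        q ^ ((∑ t ∈ Finset.Iic s, k t) - ∑ t, k t) * qnum q (k s)
          * qnum q (∑ t ∈ Finset.Iio s, k t)) :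
    ∀ (k : Fin p → ℤ) (τ : Equiv.Perm (Fin p)), ξ (k ∘ τ) = ξ k := by
  intro k τ
  have hd : q - q⁻¹ ≠ 0 := by
    rw [sub_ne_zero]
    intro h
    field_simp at h
    exact hq2 (by linear_combination h)
  refine mul_left_cancel₀ (pow_ne_zero 2 hd) ?_
  rw [hξ, hξ, sq_sub_inv_mul_xi_sum hq0 hq2, sq_sub_inv_mul_xi_sum hq0 hq2]
  simp only [Function.comp_apply, Equiv.sum_comp τ k,
    Equiv.sum_comp τ fun s => q ^ (2 * k s - ∑ t, k t)]

/-- the function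
`ξ_p(k_1,…,k_p) = Σ_{s=2}^p q^{k_1+⋯+k_s−m} (k_s)_q (k_1+⋯+k_{s−1})_q`,
with `m = k_1 + ⋯ + k_p`, is symmetric in its arguments. -/
theorem xi_symmetric {K : Type*} [Field K] (q : K) (hq0 : q ≠ 0) (hq2 : q ^ 2 ≠ 1)
    {p : ℕ} (hp : 2 ≤ p)
    (ξ : (Fin p → ℤ) → K)
    (hξ : ∀ k : Fin p → ℤ,
      ξ k = ∑ s ∈ Finset.univ.filter (fun s : Fin p => 1 ≤ (s : ℕ)),
        q ^ ((∑ t ∈ Finset.Iic s, k t) - ∑ t, k t) * qnum q (k s)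
          * qnum q (∑ t ∈ Finset.Iio s, k t)) :
    ∀ (k : Fin p → ℤ) (τ : Equiv.Perm (Fin p)), ξ (k ∘ τ) = ξ k :=
  xi_symmetric_general q hq0 hq2 ξ hξ
end

section
/- Let q be a real number with q > 0 and q ≠ 1, and let k, m, s be integers with k ≥ m ≥ 1 and 0 ≤ s ≤ m − 1. Then (m−s)_q · (k+s+1)_q · Σ_{r=1}^s (k−m+2r)_q / ( (k+r)_q · (k+r+1)_q · (m−r)_q · (m−r+1)_q ) = s_q · (k+s+1−m)_q / ( m_q · (k+1)_q ). (All q-numbers appearing in denominators have positive integer arguments, hence are nonzero.) -/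
lemma qden_ne (q : ℝ) (hq0 : 0 < q) (hq1 : q ≠ 1) : q - q⁻¹ ≠ 0 := by
  intro h
  have hq : q ≠ 0 := hq0.ne'
  have h2 : q * q = 1 := by field_simp at h; linarith
  have h3 : (q-1)*(q+1) = 0 := by ring_nf; linarith
  rcases mul_eq_zero.mp h3 with h|h
  · exact hq1 (by linarith)
  · linarith

lemma qnum_ne_zero (q : ℝ) (hq0 : 0 < q) (hq1 : q ≠ 1) {n : ℤ} (hn : n ≠ 0) :
    qnum q n ≠ 0 := by
  apply div_ne_zero _ (qden_ne q hq0 hq1)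
  have := zpow_right_injective₀ hq0 hq1
  intro h
  exact hn (by have := this (sub_eq_zero.mp h); omega)

lemma qnum_eq {K : Type*} [Field K] (q : K) (n : ℤ) :
    qnum q n = (q ^ n - (q ^ n)⁻¹) / (q - q⁻¹) := by
  simp [qnum, zpow_neg]

lemma comb (d x1 x2 x3 x4 y1 y2 y3 z1 z2 z3 z4 : ℝ) (hd : d ≠ 0)
    (h : x1*x2*x3*x4 + d*(y1*y2*y3) = z1*z2*z3*z4) :
    x1/d*(x2/d)*(x3/d)*(x4/d) + y1/d*(y2/d)*(y3/d) = z1/d*(z2/d)*(z3/d)*(z4/d) := by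
  field_simp
  linear_combination h

set_option maxHeartbeats 2000000 in
lemma key (q : ℝ) (hq : q ≠ 0) (he : q - q⁻¹ ≠ 0) (k m s : ℤ) :
    qnum q s * qnum q (k+s+1-m) * qnum q (k+s+2) * qnum q (m-s-1)
      + qnum q (k-m+2*s+2) * qnum q m * qnum q (k+1)
    = qnum q (s+1) * qnum q (k+s+2-m) * qnum q (m-s) * qnum q (k+s+1) := by
  simp only [qnum_eq q]
  apply comb _ _ _ _ _ _ _ _ _ _ _ _ he
  have ha : (q:ℝ)^k ≠ 0 := zpow_ne_zero _ hq
  have hb : (q:ℝ)^m ≠ 0 := zpow_ne_zero _ hq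
  have hc : (q:ℝ)^s ≠ 0 := zpow_ne_zero _ hq
  simp only [show k+s+1-m = (k+s+1)-m from rfl, show k-m+2*s+2 = ((k-m)+(s+s))+(1+1) from by ring,
    show k+s+2 = (k+s)+(1+1) from by ring, show k+s+2-m = ((k+s)+(1+1))-m from by ring,
    show m-s-1 = (m-s)-1 from rfl,
    zpow_add₀ hq, zpow_sub₀ hq, zpow_one]
  field_simp
  ring

set_option maxHeartbeats 2000000 in
/-- the summation identity evaluating the coefficient `β_s`:
`(m−s)_q (k+s+1)_q Σ_{r=1}^s (k−m+2r)_q / ((k+r)_q (k+r+1)_q (m−r)_q (m−r+1)_q)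
  = s_q (k+s+1−m)_q / (m_q (k+1)_q)` for integers `k ≥ m ≥ 1`, `0 ≤ s ≤ m−1`. -/
theorem beta_sum_identity (q : ℝ) (hq0 : 0 < q) (hq1 : q ≠ 1) (k m s : ℤ)
    (hkm : m ≤ k) (hm : 1 ≤ m) (hs0 : 0 ≤ s) (hsm : s ≤ m - 1) :
    qnum q (m - s) * qnum q (k + s + 1) *
      ∑ r ∈ Finset.Icc (1 : ℤ) s,
        qnum q (k - m + 2 * r) /
          (qnum q (k + r) * qnum q (k + r + 1) * qnum q (m - r) * qnum q (m - r + 1))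
      = qnum q s * qnum q (k + s + 1 - m) / (qnum q m * qnum q (k + 1)) := by
  obtain ⟨n, rfl⟩ := Int.eq_ofNat_of_zero_le hs0
  clear hs0
  revert hsm
  induction n with
  | zero =>
      intro _
      rw [show ((0:ℕ):ℤ) = 0 from rfl, Finset.Icc_eq_empty (by omega), Finset.sum_empty]
      simp [qnum]
  | succ n ih =>
      intro hsm
      push_cast at hsm ⊢
      have IH := ih (by push_cast; omega)
      push_cast at IH
      set s : ℤ := (n : ℤ) with hs_def
      have hsplit : Finset.Icc (1:ℤ) (s+1) = insert (s+1) (Finset.Icc 1 s) := by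
        ext x; simp [Finset.mem_Icc]; omega
      rw [hsplit, Finset.sum_insert (by simp [Finset.mem_Icc])]
      simp only [show m - (s+1) = m-s-1 from by ring,
        show k - m + 2*(s+1) = k-m+2*s+2 from by ring, show k + (s+1) = k+s+1 from by ring,
        show m - (s+1) + 1 = m-s from by ring]
      have hq : q ≠ 0 := hq0.ne'
      have he := qden_ne q hq0 hq1
      have hkey := key q hq he k m s
      simp only [show k+s+2 = k+s+1+1 from by ring, show k+s+2-m = k+s+1+1-m from by ring] at hkey
      have N : ∀ t : ℤ, t ≠ 0 → qnum q t ≠ 0 := fun t ht => qnum_ne_zero q hq0 hq1 ht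
      have n1 := N m (by omega)
      have n2 := N (k+1) (by omega)
      have n3 := N (m-s) (by omega)
      have n4 := N (k+s+1) (by omega)
      have n5 := N (k+s+1+1) (by omega)
      have n6 := N (m-s-1) (by omega)
      rw [show m-s-1+1 = m-s from by ring]
      field_simp at IH ⊢
      linear_combination qnum q (m-s-1) * qnum q (k+s+1+1) * IH + hkey
end
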